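/- There exists ε > 0 and a function ρ, analytic on the disk {u ∈ ℂ : |u − 1| < ε}, such that ρ(1) = π/2, G(ρ(u), u) = 0 for all |u − 1| < ε, and ρ is given explicitly by ρ(u) = (2/√(1−2u))·artanh(√(1−2u)) = (1/√(1−2u))·log((1 + √(1−2u))/(1 − √(1−2u))), where the branches of the square root and logarithm are chosen so that ρ(1) = π/2 (the value is independent of the choice of square root since the expression is even in √(1−2u)). -/

import Mathlib

/-! With `s ^ 2 = 1 - 2u`, the series defining `G` sums to `cosh (z s / 2) - sinh (z s / 2) / s`,
which vanishes as soon as `exp (z s) = (1 + s) / (1 - s)`, e.g. at `z = s⁻¹ log ((1 + s) / (1 - s))`.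
This value does not depend on the sign of `s`, since `log w⁻¹ = -log w` off the negative real
axis. Choosing `s = I √(2u - 1)`, analytic near `u = 1` with `s = I` there, gives `ρ`; and
`(1 + I) / (1 - I) = I`, `log I = π I / 2` give `ρ 1 = π / 2`. -/

open Complex

/-- The entire function
`G(z,u) = cosh((z/2)√(1−2u)) − sinh((z/2)√(1−2u))/√(1−2u)`,
defined by its (everywhere convergent) power series
`G(z,u) = Σ_m (1−2u)^m [ (z/2)^{2m}/(2m)! − (z/2)^{2m+1}/(2m+1)! ]`,
which makes sense for all `z, u ∈ ℂ` and is independent of the branch of the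
square root `√(1−2u)`. -/
noncomputable def G (z u : ℂ) : ℂ :=
  ∑' m : ℕ, (1 - 2 * u) ^ m *
    ((z / 2) ^ (2 * m) / (Nat.factorial (2 * m) : ℂ)
      - (z / 2) ^ (2 * m + 1) / (Nat.factorial (2 * m + 1) : ℂ))

theorem G_eq_cosh_sub_sinh_div {z u s : ℂ} (hs : s ^ 2 = 1 - 2 * u) (hs₀ : s ≠ 0) :
    G z u = cosh (z / 2 * s) - sinh (z / 2 * s) / s := by
  refine (((hasSum_cosh _).sub ((hasSum_sinh _).div_const s)).congr_fun fun m => ?_).tsum_eq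
  rw [← hs, ← pow_mul, mul_pow, mul_pow, pow_succ s (2 * m)]
  field_simp

theorem cosh_half_sub_sinh_half_div_eq_zero {s L : ℂ} (hs : s ≠ 0)
    (hL : exp L = (1 + s) / (1 - s)) : cosh (L / 2) - sinh (L / 2) / s = 0 := by
  have h1s : 1 - s ≠ 0 := fun h => exp_ne_zero L (by rw [hL, h, div_zero])
  have ha : exp (L / 2) ^ 2 * (1 - s) = 1 + s := by
    rw [← exp_nat_mul, show ((2 : ℕ) : ℂ) * (L / 2) = L by push_cast; ring, hL,
      div_mul_cancel₀ _ h1s]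
  rw [cosh, sinh, exp_neg]
  field_simp
  linear_combination -ha

/-- `(2 / s) * artanh s`, with the principal logarithm. -/
noncomputable def twoArtanhDiv (s : ℂ) : ℂ := s⁻¹ * log ((1 + s) / (1 - s))

theorem G_twoArtanhDiv_eq_zero {u s : ℂ} (hs : s ^ 2 = 1 - 2 * u) (hs₀ : s ≠ 0)
    (hw : (1 + s) / (1 - s) ≠ 0) : G (twoArtanhDiv s) u = 0 := by
  rw [G_eq_cosh_sub_sinh_div hs hs₀,
    show twoArtanhDiv s / 2 * s = log ((1 + s) / (1 - s)) / 2 by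
      rw [twoArtanhDiv]; field_simp]
  exact cosh_half_sub_sinh_half_div_eq_zero hs₀ (exp_log hw)

theorem twoArtanhDiv_neg {s : ℂ} (hs : ((1 + s) / (1 - s)).arg ≠ Real.pi) :
    twoArtanhDiv (-s) = twoArtanhDiv s := by
  have hw : (1 + -s) / (1 - -s) = ((1 + s) / (1 - s))⁻¹ := by rw [inv_div]; ring_nf
  rw [twoArtanhDiv, twoArtanhDiv, hw, log_inv _ hs, inv_neg, neg_mul_neg]

theorem twoArtanhDiv_eq_of_sq_eq {s t : ℂ} (h : s ^ 2 = t ^ 2)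
    (ht : ((1 + t) / (1 - t)).arg ≠ Real.pi) : twoArtanhDiv s = twoArtanhDiv t := by
  rcases sq_eq_sq_iff_eq_or_eq_neg.1 h with rfl | rfl
  · rfl
  · exact twoArtanhDiv_neg ht

theorem one_add_I_div_one_sub_I : (1 + I) / (1 - I) = I := by
  rw [div_eq_iff (by simp [sub_eq_zero, Complex.ext_iff])]
  linear_combination I_sq

theorem twoArtanhDiv_I : twoArtanhDiv I = Real.pi / 2 := by
  rw [twoArtanhDiv, one_add_I_div_one_sub_I, log_I]
  field_simp

theorem analyticAt_twoArtanhDiv {s : ℂ} (hs : s ≠ 0) (hw : (1 + s) / (1 - s) ∈ slitPlane) :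
    AnalyticAt ℂ twoArtanhDiv s := by
  have h1s : 1 - s ≠ 0 := fun h => slitPlane_ne_zero hw (by rw [h, div_zero])
  exact (analyticAt_id.inv hs).mul
    (((analyticAt_const.add analyticAt_id).div (analyticAt_const.sub analyticAt_id) h1s).clog hw)

/-- Unlike the principal square root of `1 - 2u`, whose branch cut passes through `u = 1`, this
root is analytic there. -/
noncomputable def sqrtOneSubTwoMul (u : ℂ) : ℂ := I * (2 * u - 1) ^ (2⁻¹ : ℂ)

theorem sqrtOneSubTwoMul_sq (u : ℂ) : sqrtOneSubTwoMul u ^ 2 = 1 - 2 * u := by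
  rw [sqrtOneSubTwoMul, mul_pow, cpow_ofNat_inv_pow, I_sq]
  ring

theorem sqrtOneSubTwoMul_one : sqrtOneSubTwoMul 1 = I := by
  norm_num [sqrtOneSubTwoMul]

theorem sqrtOneSubTwoMul_ne_zero {u : ℂ} (hu : 2 * u - 1 ∈ slitPlane) :
    sqrtOneSubTwoMul u ≠ 0 := by
  rw [← pow_ne_zero_iff two_ne_zero, sqrtOneSubTwoMul_sq, ← neg_sub, neg_ne_zero]
  exact slitPlane_ne_zero hu

theorem analyticAt_sqrtOneSubTwoMul {u : ℂ} (hu : 2 * u - 1 ∈ slitPlane) :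
    AnalyticAt ℂ sqrtOneSubTwoMul u :=
  analyticAt_const.mul ((by fun_prop : AnalyticAt ℂ (fun v : ℂ => 2 * v - 1) u).cpow
    analyticAt_const hu)

theorem eventually_mem_slitPlane_nhds_one :
    ∀ᶠ u in nhds (1 : ℂ), 2 * u - 1 ∈ slitPlane ∧
      (1 + sqrtOneSubTwoMul u) / (1 - sqrtOneSubTwoMul u) ∈ slitPlane := by
  have h₁ : (2 : ℂ) * 1 - 1 ∈ slitPlane := by norm_num
  have hσ := (analyticAt_sqrtOneSubTwoMul h₁).continuousAt
  have hw : ContinuousAt (fun u => (1 + sqrtOneSubTwoMul u) / (1 - sqrtOneSubTwoMul u)) 1 :=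
    (continuousAt_const.add hσ).div (continuousAt_const.sub hσ)
      (by simp [sqrtOneSubTwoMul_one, sub_eq_zero, Complex.ext_iff])
  refine ((by fun_prop : Continuous fun u : ℂ => 2 * u - 1).continuousAt.eventually_mem
    (isOpen_slitPlane.mem_nhds h₁)).and (hw.eventually_mem (isOpen_slitPlane.mem_nhds ?_))
  simp [sqrtOneSubTwoMul_one, one_add_I_div_one_sub_I, mem_slitPlane_iff]

/-- near `u = 1` there is an analytic function `ρ` with `ρ(1) = π/2`,
`G(ρ(u),u) = 0`, given explicitly by `ρ(u) = (1/√(1−2u))·log((1+√(1−2u))/(1−√(1−2u)))`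
(for either choice of the square root `s` of `1−2u`). -/
theorem movable_singularity_exists :
    ∃ ε : ℝ, 0 < ε ∧ ∃ ρ : ℂ → ℂ,
      AnalyticOnNhd ℂ ρ (Metric.ball (1 : ℂ) ε) ∧
      ρ 1 = (Real.pi : ℂ) / 2 ∧
      ∀ u ∈ Metric.ball (1 : ℂ) ε,
        G (ρ u) u = 0 ∧
        ∀ s : ℂ, s ^ 2 = 1 - 2 * u →
          ρ u = s⁻¹ * Complex.log ((1 + s) / (1 - s)) := by
  obtain ⟨ε, hε, hball⟩ := Metric.eventually_nhds_iff_ball.1 eventually_mem_slitPlane_nhds_one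
  refine ⟨ε, hε, fun u => twoArtanhDiv (sqrtOneSubTwoMul u), fun u hu => ?_, ?_, fun u hu => ?_⟩
  · obtain ⟨hu, hw⟩ := hball u hu
    exact (analyticAt_twoArtanhDiv (sqrtOneSubTwoMul_ne_zero hu) hw).comp
      (analyticAt_sqrtOneSubTwoMul hu)
  · exact (congrArg twoArtanhDiv sqrtOneSubTwoMul_one).trans twoArtanhDiv_I
  · obtain ⟨hu, hw⟩ := hball u hu
    refine ⟨G_twoArtanhDiv_eq_zero (sqrtOneSubTwoMul_sq u) (sqrtOneSubTwoMul_ne_zero hu)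
      (slitPlane_ne_zero hw), fun s hs => ?_⟩
    exact (twoArtanhDiv_eq_of_sq_eq (hs.trans (sqrtOneSubTwoMul_sq u).symm)
      (slitPlane_arg_ne_pi hw)).symm
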